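/- For all real ε, u, v the following two polynomial identities hold: (i) I22·p3⁺(u, v)² + I11·q3⁻(u, v)² = Q(u, v); (ii) I22·p3⁻(u, v)² + I11·q3⁺(u, v)² = Q(u, v) + (ε³·u·v/2)·(I11 − I22)·(I11·u² + I22·v²)·(I13·u + I23·v). -/
import Mathlib


noncomputable section

/-- `p3⁺` (sign `+1`) and `p3⁻` (sign `-1`). -/
def p3 (I11 I22 I13 I23 ε sgn u v : ℝ) : ℝ :=
  I11 * u + sgn * (ε / 2) * v * (I13 * u + I23 * v)
    + (ε ^ 2 / 4) * u * (I11 * u ^ 2 + I22 * v ^ 2)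

/-- `q3⁺` (sign `+1`) and `q3⁻` (sign `-1`). -/
def q3 (I11 I22 I13 I23 ε sgn u v : ℝ) : ℝ :=
  I22 * v + sgn * (ε / 2) * u * (I13 * u + I23 * v)
    + (ε ^ 2 / 4) * v * (I11 * u ^ 2 + I22 * v ^ 2)

/-- The polynomial `Q`. -/
def Qpoly (I11 I22 I13 I23 ε u v : ℝ) : ℝ :=
  (1 / 16) * (I11 * u ^ 2 + I22 * v ^ 2) *
    (16 * I11 * I22
      + ε ^ 2 * (8 * I11 * I22 * (u ^ 2 + v ^ 2) + 4 * (I13 * u + I23 * v) ^ 2)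
      + 4 * ε ^ 3 * u * v * (I22 - I11) * (I13 * u + I23 * v)
      + ε ^ 4 * (I11 * u ^ 2 + I22 * v ^ 2) * (I22 * u ^ 2 + I11 * v ^ 2))

/-- The two polynomial identities relating `p3^±`, `q3^±` and `Q` for the
consistent (Cayley-based) discretisation of the Suslov problem. -/
theorem suslov_Q_identities
    (I11 I22 I13 I23 : ℝ) (hI11 : 0 < I11) (hI22 : 0 < I22)
    (ε u v : ℝ) :
    I22 * (p3 I11 I22 I13 I23 ε 1 u v) ^ 2 + I11 * (q3 I11 I22 I13 I23 ε (-1) u v) ^ 2 =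
        Qpoly I11 I22 I13 I23 ε u v ∧
      I22 * (p3 I11 I22 I13 I23 ε (-1) u v) ^ 2 + I11 * (q3 I11 I22 I13 I23 ε 1 u v) ^ 2 =
        Qpoly I11 I22 I13 I23 ε u v
          + (ε ^ 3 * u * v / 2) * (I11 - I22) * (I11 * u ^ 2 + I22 * v ^ 2) *
            (I13 * u + I23 * v) := by
  constructor <;> (simp only [p3, q3, Qpoly]; ring)

end
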